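/- Let D_F be a symmetric positive semidefinite 3×3 matrix with trace(D_F) = 1, let q̂ ∈ ℝ³ be nonzero with |q̂| ≤ 1, and set α = 1 − |q̂|². Then the Kershaw pressure tensor P̂ = α D_F + (1−α) (q̂⊗q̂)/|q̂|² satisfies trace(P̂) = 1 and P̂ − q̂⊗q̂ is positive semidefinite. -/

import Mathlib

open Matrix

lemma trace_vmv (q : Fin 3 → ℝ) : (Matrix.vecMulVec q q).trace = q ⬝ᵥ q := by
  simp [Matrix.trace, Matrix.vecMulVec, Matrix.diag, dotProduct]

/-- For D_F symmetric PSD with trace 1, 0 ≠ q̂ with |q̂| ≤ 1 and α = 1 − |q̂|²,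
the Kershaw pressure P̂ = αD_F + (1−α)(q̂⊗q̂)/|q̂|² has trace 1 and P̂ − q̂⊗q̂ is PSD. -/
theorem kershaw_pressure_realizable (DF : Matrix (Fin 3) (Fin 3) ℝ)
    (hsym : DF.IsSymm) (hpsd : DF.PosSemidef) (htr : DF.trace = 1)
    (q : Fin 3 → ℝ) (hq : q ≠ 0) (hq1 : q ⬝ᵥ q ≤ 1) :
    ((1 - q ⬝ᵥ q) • DF +
        (1 - (1 - q ⬝ᵥ q)) • ((q ⬝ᵥ q)⁻¹ • Matrix.vecMulVec q q)).trace = 1 ∧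
    (((1 - q ⬝ᵥ q) • DF +
        (1 - (1 - q ⬝ᵥ q)) • ((q ⬝ᵥ q)⁻¹ • Matrix.vecMulVec q q)) -
      Matrix.vecMulVec q q).PosSemidef := by
  have hs0 : q ⬝ᵥ q ≠ 0 := fun h => hq (dotProduct_self_eq_zero.mp h)
  have hkey : (1 - (1 - q ⬝ᵥ q)) • ((q ⬝ᵥ q)⁻¹ • Matrix.vecMulVec q q)
      = Matrix.vecMulVec q q := by
    rw [smul_smul]
    have : (1 - (1 - q ⬝ᵥ q)) * (q ⬝ᵥ q)⁻¹ = 1 := by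
      have h1 : 1 - (1 - q ⬝ᵥ q) = q ⬝ᵥ q := by ring
      rw [h1, mul_inv_cancel₀ hs0]
    rw [this, one_smul]
  rw [hkey]
  constructor
  · rw [Matrix.trace_add, Matrix.trace_smul, htr, trace_vmv]
    simp [smul_eq_mul]
  · have : (1 - q ⬝ᵥ q) • DF + Matrix.vecMulVec q q - Matrix.vecMulVec q q
        = (1 - q ⬝ᵥ q) • DF := by ring_nf; abel
    rw [this]
    have hc : (0:ℝ) ≤ 1 - q ⬝ᵥ q := by linarith
    refine ⟨?_, fun x => ?_⟩
    · unfold Matrix.IsHermitian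
      rw [Matrix.conjTranspose_smul, hpsd.1.eq, star_trivial]
    have h := mul_nonneg hc (hpsd.2 x)
    simp_rw [Finsupp.mul_sum] at h
    refine h.trans_eq ?_
    simp only [Matrix.smul_apply, smul_eq_mul]
    refine Finsupp.sum_congr fun i _ => Finsupp.sum_congr fun j _ => ?_
    ring
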